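/- Let e₁ = (1,0), e₂ = (0,1) in ℤ², let ρ, a₁, a₂ ∈ ℝ, and let g : ℤ² → ℝ be finitely supported. Define Ag : ℤ² → ℝ by: (Ag)(0) = 0; (Ag)(x) = −ρ·a₁·(g(x+e₁) − g(x−e₁)) − ρ·a₂·(g(x+e₂) − g(x−e₂)) for x ∉ {0, e₁, −e₁, e₂, −e₂}; (Ag)(e₁) = −ρ·a₁·(g(2e₁) − g(−e₁)) − ρ·a₂·(g(e₁+e₂) − g(e₁−e₂)); (Ag)(−e₁) = ρ·a₁·(g(−2e₁) − g(e₁)) − ρ·a₂·(g(−e₁+e₂) − g(−e₁−e₂)); (Ag)(e₂) = −ρ·a₂·(g(2e₂) − g(−e₂)) − ρ·a₁·(g(e₂+e₁) − g(e₂−e₁)); (Ag)(−e₂) = ρ·a₂·(g(−2e₂) − g(e₂)) − ρ·a₁·(g(−e₂+e₁) − g(−e₂−e₁)). Then for all v₁, v₂ ∈ ℝ, writing ĥ(v) = ∑_{x∈ℤ²} e^{2πi(x₁v₁+x₂v₂)}·h(x) and γ(r) = e^{2πir} − e^{−2πir}, one has: (Ag)^(v) = ρ·(a₁·γ(v₁)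 + a₂·γ(v₂))·ĝ(v) − ρ·a₁·(e^{−2πiv₁} − 1)·g(e₁) + ρ·a₁·(e^{2πiv₁} − 1)·g(−e₁) − ρ·a₂·(e^{−2πiv₂} − 1)·g(e₂) + ρ·a₂·(e^{2πiv₂} − 1)·g(−e₂) − ρ·(a₁·γ(v₁) + a₂·γ(v₂))·g(0). -/

import Mathlib

open Real

/-- Fourier transform on `ℤ²` of a finitely supported function. -/
noncomputable def ftZ2 (h : ℤ × ℤ → ℝ) (v₁ v₂ : ℝ) : ℂ :=
  ∑ᶠ x : ℤ × ℤ,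
    Complex.exp (2 * (π : ℂ) * Complex.I * ((x.1 : ℂ) * (v₁ : ℂ) + (x.2 : ℂ) * (v₂ : ℂ))) *
      (h x : ℂ)

/-- `γ(r) = e^{2πir} − e^{−2πir}`. -/
noncomputable def gam (r : ℝ) : ℂ :=
  Complex.exp (2 * (π : ℂ) * Complex.I * (r : ℂ)) -
    Complex.exp (-(2 * (π : ℂ) * Complex.I * (r : ℂ)))

/-- The degree-preserving part `Ā_{nn;1,1}` of the antisymmetric nearest-neighbor
coefficient operator in `d = 2`. -/
def Aop (ρ a₁ a₂ : ℝ) (g : ℤ × ℤ → ℝ) : ℤ × ℤ → ℝ := fun x =>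
  if x = (0, 0) then 0
  else if x = (1, 0) then
    -ρ * a₁ * (g (2, 0) - g (-1, 0)) - ρ * a₂ * (g (1, 1) - g (1, -1))
  else if x = (-1, 0) then
    ρ * a₁ * (g (-2, 0) - g (1, 0)) - ρ * a₂ * (g (-1, 1) - g (-1, -1))
  else if x = (0, 1) then
    -ρ * a₂ * (g (0, 2) - g (0, -1)) - ρ * a₁ * (g (1, 1) - g (-1, 1))
  else if x = (0, -1) then
    ρ * a₂ * (g (0, -2) - g (0, 1)) - ρ * a₁ * (g (1, -1) - g (-1, -1))
  else
    -ρ * a₁ * (g (x.1 + 1, x.2) - g (x.1 - 1, x.2)) -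
      ρ * a₂ * (g (x.1, x.2 + 1) - g (x.1, x.2 - 1))

/-!
Away from the five sites `0, ±e₁, ±e₂`, `Aop` agrees with the translation-invariant operator
`-ρ (a₁ ∂₁ + a₂ ∂₂)`, where `∂ⱼ g (x) = g (x + eⱼ) - g (x - eⱼ)`. The Fourier transform turns
a shift by `e` into multiplication by the character at `-e`, so `∂ⱼ` becomes multiplication
by `-γ(vⱼ)`. What is left is supported on the five sites, and its transform is a finite sum.
-/

open Function

def centralDiff {G M : Type*} [AddGroup G] [Sub M] (f : G → M) (e x : G) : M :=
  f (x + e) - f (x - e)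

section FiniteSupport

variable {G M : Type*} [AddGroup G]

lemma centralDiff_eq [Sub M] (f : G → M) (e : G) :
    centralDiff f e = fun x => f (x + e) - f (x + -e) :=
  funext fun x => by rw [centralDiff, sub_eq_add_neg x]

lemma Function.HasFiniteSupport.comp_add_right [Zero M] {f : G → M} (hf : HasFiniteSupport f)
    (e : G) : HasFiniteSupport fun x => f (x + e) :=
  hf.comp_of_injective (add_left_injective e)

lemma Function.HasFiniteSupport.centralDiff [AddGroup M] {f : G → M} (hf : HasFiniteSupport f)
    (e : G) : HasFiniteSupport (centralDiff f e) := by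
  rw [centralDiff_eq]
  exact (hf.comp_add_right e).sub (hf.comp_add_right (-e))

end FiniteSupport

noncomputable def ftKernel (v₁ v₂ : ℝ) (x : ℤ × ℤ) : ℂ :=
  Complex.exp (2 * (π : ℂ) * Complex.I * ((x.1 : ℂ) * (v₁ : ℂ) + (x.2 : ℂ) * (v₂ : ℂ)))

section Fourier

variable (v₁ v₂ : ℝ) {f h : ℤ × ℤ → ℝ}

lemma ftKernel_add (x y : ℤ × ℤ) :
    ftKernel v₁ v₂ (x + y) = ftKernel v₁ v₂ x * ftKernel v₁ v₂ y := by
  simp only [ftKernel, ← Complex.exp_add]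
  congr 1
  push_cast [Prod.fst_add, Prod.snd_add]
  ring

lemma ftKernel_neg_mul_self (x : ℤ × ℤ) : ftKernel v₁ v₂ (-x) * ftKernel v₁ v₂ x = 1 := by
  rw [← ftKernel_add, neg_add_cancel]
  simp [ftKernel]

lemma gam_eq_ftKernel_fst : gam v₁ = ftKernel v₁ v₂ (1, 0) - ftKernel v₁ v₂ (-(1, 0)) := by
  simp [gam, ftKernel]

lemma gam_eq_ftKernel_snd : gam v₂ = ftKernel v₁ v₂ (0, 1) - ftKernel v₁ v₂ (-(0, 1)) := by
  simp [gam, ftKernel]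

lemma ftZ2_eq_finsum_ftKernel_mul : ftZ2 f v₁ v₂ = ∑ᶠ x, ftKernel v₁ v₂ x * (f x : ℂ) := rfl

lemma hasFiniteSupport_ftKernel_mul (hf : HasFiniteSupport f) :
    HasFiniteSupport fun x => ftKernel v₁ v₂ x * (f x : ℂ) :=
  HasFiniteSupport.fun_mul_right _ (hf.fun_comp Complex.ofReal_zero)

lemma ftZ2_add (hf : HasFiniteSupport f) (hh : HasFiniteSupport h) :
    ftZ2 (fun x => f x + h x) v₁ v₂ = ftZ2 f v₁ v₂ + ftZ2 h v₁ v₂ := by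
  simp only [ftZ2_eq_finsum_ftKernel_mul, Complex.ofReal_add, mul_add]
  exact finsum_add_distrib (hasFiniteSupport_ftKernel_mul v₁ v₂ hf)
    (hasFiniteSupport_ftKernel_mul v₁ v₂ hh)

lemma ftZ2_sub (hf : HasFiniteSupport f) (hh : HasFiniteSupport h) :
    ftZ2 (fun x => f x - h x) v₁ v₂ = ftZ2 f v₁ v₂ - ftZ2 h v₁ v₂ := by
  simp only [ftZ2_eq_finsum_ftKernel_mul, Complex.ofReal_sub, mul_sub]
  exact finsum_sub_distrib (hasFiniteSupport_ftKernel_mul v₁ v₂ hf)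
    (hasFiniteSupport_ftKernel_mul v₁ v₂ hh)

lemma ftZ2_const_mul (c : ℝ) : ftZ2 (fun x => c * f x) v₁ v₂ = c * ftZ2 f v₁ v₂ := by
  simp only [ftZ2_eq_finsum_ftKernel_mul, mul_finsum, Complex.ofReal_mul, mul_left_comm]

lemma ftZ2_comp_add_right (e : ℤ × ℤ) :
    ftZ2 (fun x => f (x + e)) v₁ v₂ = ftKernel v₁ v₂ (-e) * ftZ2 f v₁ v₂ := by
  simp only [ftZ2_eq_finsum_ftKernel_mul, mul_finsum]
  conv_rhs => rw [← finsum_comp_equiv (Equiv.addRight e)]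
  refine finsum_congr fun x => ?_
  rw [Equiv.coe_addRight, ftKernel_add]
  linear_combination (-(ftKernel v₁ v₂ x * f (x + e))) * ftKernel_neg_mul_self v₁ v₂ e

lemma ftZ2_centralDiff (hf : HasFiniteSupport f) (e : ℤ × ℤ) :
    ftZ2 (centralDiff f e) v₁ v₂ = (ftKernel v₁ v₂ (-e) - ftKernel v₁ v₂ e) * ftZ2 f v₁ v₂ := by
  rw [centralDiff_eq, ftZ2_sub _ _ (hf.comp_add_right e) (hf.comp_add_right (-e)),
    ftZ2_comp_add_right, ftZ2_comp_add_right, neg_neg, sub_mul]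

lemma ftZ2_of_support_subset (s : Finset (ℤ × ℤ)) (hs : support f ⊆ s) :
    ftZ2 f v₁ v₂ = ∑ x ∈ s, ftKernel v₁ v₂ x * (f x : ℂ) := by
  refine finsum_eq_sum_of_support_subset _ fun x hx => hs ?_
  exact support_comp_subset Complex.ofReal_zero f (support_mul_subset_right _ _ hx)

end Fourier

def AopBulk (ρ a₁ a₂ : ℝ) (g : ℤ × ℤ → ℝ) : ℤ × ℤ → ℝ := fun x =>
  -ρ * a₁ * centralDiff g (1, 0) x - ρ * a₂ * centralDiff g (0, 1) x

section Operator

variable (ρ a₁ a₂ : ℝ) {g : ℤ × ℤ → ℝ}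

lemma hasFiniteSupport_AopBulk (hg : HasFiniteSupport g) :
    HasFiniteSupport (AopBulk ρ a₁ a₂ g) :=
  ((hg.centralDiff _).fun_mul_right _).fun_sub ((hg.centralDiff _).fun_mul_right _)

lemma ftZ2_AopBulk (hg : HasFiniteSupport g) (v₁ v₂ : ℝ) :
    ftZ2 (AopBulk ρ a₁ a₂ g) v₁ v₂ = ρ * (a₁ * gam v₁ + a₂ * gam v₂) * ftZ2 g v₁ v₂ := by
  unfold AopBulk
  rw [ftZ2_sub _ _ ((hg.centralDiff _).fun_mul_right _) ((hg.centralDiff _).fun_mul_right _),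
    ftZ2_const_mul, ftZ2_const_mul, ftZ2_centralDiff _ _ hg, ftZ2_centralDiff _ _ hg,
    gam_eq_ftKernel_fst v₁ v₂, gam_eq_ftKernel_snd v₁ v₂]
  push_cast
  ring

lemma support_Aop_sub_AopBulk_subset (g : ℤ × ℤ → ℝ) :
    support (fun x => Aop ρ a₁ a₂ g x - AopBulk ρ a₁ a₂ g x) ⊆
      ({(0, 0), (1, 0), (-1, 0), (0, 1), (0, -1)} : Finset (ℤ × ℤ)) := by
  intro x hx
  contrapose! hx
  simp only [Finset.coe_insert, Finset.coe_singleton, Set.mem_insert_iff,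
    Set.mem_singleton_iff, not_or] at hx
  obtain ⟨h₀, h₁, h₂, h₃, h₄⟩ := hx
  rcases x with ⟨m, n⟩
  simp [Aop, AopBulk, centralDiff, h₀, h₁, h₂, h₃, h₄, sub_eq_add_neg]

lemma ftZ2_Aop_sub_AopBulk (g : ℤ × ℤ → ℝ) (v₁ v₂ : ℝ) :
    ftZ2 (fun x => Aop ρ a₁ a₂ g x - AopBulk ρ a₁ a₂ g x) v₁ v₂ =
      - (ρ : ℂ) * (a₁ : ℂ) *
            (Complex.exp (-(2 * (π : ℂ) * Complex.I * (v₁ : ℂ))) - 1) * (g (1, 0) : ℂ)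
        + (ρ : ℂ) * (a₁ : ℂ) *
            (Complex.exp (2 * (π : ℂ) * Complex.I * (v₁ : ℂ)) - 1) * (g (-1, 0) : ℂ)
        - (ρ : ℂ) * (a₂ : ℂ) *
            (Complex.exp (-(2 * (π : ℂ) * Complex.I * (v₂ : ℂ))) - 1) * (g (0, 1) : ℂ)
        + (ρ : ℂ) * (a₂ : ℂ) *
            (Complex.exp (2 * (π : ℂ) * Complex.I * (v₂ : ℂ)) - 1) * (g (0, -1) : ℂ)
        - (ρ : ℂ) * ((a₁ : ℂ) * gam v₁ + (a₂ : ℂ) * gam v₂) * (g (0, 0) : ℂ) := by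
  rw [ftZ2_of_support_subset _ _ _ (support_Aop_sub_AopBulk_subset ρ a₁ a₂ g),
    Finset.sum_insert (by decide), Finset.sum_insert (by decide), Finset.sum_insert (by decide),
    Finset.sum_insert (by decide), Finset.sum_singleton]
  simp only [ftKernel, Int.cast_zero, zero_mul, add_zero, mul_zero, Complex.exp_zero, Aop,
    ↓reduceIte, AopBulk, neg_mul, centralDiff, Prod.mk_add_mk, zero_add, Prod.mk_sub_mk, zero_sub,
    Int.reduceNeg, sub_self, neg_sub, sub_neg_eq_add, Complex.ofReal_add, Complex.ofReal_mul,
    Complex.ofReal_sub, one_mul, Int.cast_one, Prod.mk.injEq, one_ne_zero, and_true, Int.reduceAdd,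
    sub_zero, sub_sub_sub_cancel_right, Complex.ofReal_neg, Int.cast_neg, mul_neg, neg_eq_zero,
    reduceCtorEq, neg_add_cancel, Int.reduceSub, and_false, zero_ne_one, and_self, zero_eq_neg, gam,
    ← Prod.mk_zero_zero]
  ring_nf

end Operator

theorem stmt_18 (ρ a₁ a₂ : ℝ) (g : ℤ × ℤ → ℝ) (hg : (Function.support g).Finite)
    (v₁ v₂ : ℝ) :
    ftZ2 (Aop ρ a₁ a₂ g) v₁ v₂ =
      (ρ : ℂ) * ((a₁ : ℂ) * gam v₁ + (a₂ : ℂ) * gam v₂) * ftZ2 g v₁ v₂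
        - (ρ : ℂ) * (a₁ : ℂ) *
            (Complex.exp (-(2 * (π : ℂ) * Complex.I * (v₁ : ℂ))) - 1) * (g (1, 0) : ℂ)
        + (ρ : ℂ) * (a₁ : ℂ) *
            (Complex.exp (2 * (π : ℂ) * Complex.I * (v₁ : ℂ)) - 1) * (g (-1, 0) : ℂ)
        - (ρ : ℂ) * (a₂ : ℂ) *
            (Complex.exp (-(2 * (π : ℂ) * Complex.I * (v₂ : ℂ))) - 1) * (g (0, 1) : ℂ)
        + (ρ : ℂ) * (a₂ : ℂ) *
            (Complex.exp (2 * (π : ℂ) * Complex.I * (v₂ : ℂ)) - 1) * (g (0, -1) : ℂ)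
        - (ρ : ℂ) * ((a₁ : ℂ) * gam v₁ + (a₂ : ℂ) * gam v₂) * (g (0, 0) : ℂ) := by
  have hboundary : HasFiniteSupport fun x => Aop ρ a₁ a₂ g x - AopBulk ρ a₁ a₂ g x :=
    (Finset.finite_toSet _).subset (support_Aop_sub_AopBulk_subset ρ a₁ a₂ g)
  have hsplit : Aop ρ a₁ a₂ g =
      fun x => AopBulk ρ a₁ a₂ g x + (Aop ρ a₁ a₂ g x - AopBulk ρ a₁ a₂ g x) :=
    funext fun x => (add_sub_cancel _ _).symm
  rw [hsplit, ftZ2_add _ _ (hasFiniteSupport_AopBulk ρ a₁ a₂ hg) hboundary,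
    ftZ2_AopBulk ρ a₁ a₂ hg, ftZ2_Aop_sub_AopBulk]
  ring
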